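/- arXiv:math/0502079 — 2 statements merged into one kernel-verified Lean document; each statement's English description precedes it below -/
import Mathlib

section
/- Let u be a smooth positive solution of the heat equation on an open set Q ⊂ ℝⁿ × ℝ with u ≤ 1 on Q. Set f := ln u (so f ≤ 0) and w := |∇f|²/(1−f)². Then on Q one has the differential inequality Δw − ∂_t w ≥ (2f/(1−f)) ⟨∇f, ∇w⟩ + 2(1−f) w². (Inequality (2.9) in the flat case k = 0; this is the key pointwise inequality in the proof of Theorem 1.1.) -/
/-
Put `h := log (1 - f)`. Then `w = |∇h|²`, and `h` solves `∂ₜh = Δh + f w` because `f` solves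
`∂ₜf = Δf + |∇f|²`. Bochner's formula for the heat operator gives
`Δw - ∂ₜw = 2 |∇²h|² - 2 ⟨∇h, ∇(f w)⟩`, and `∇h = -∇f / (1 - f)` turns the last term into the
right-hand side, leaving `2 |∇²h|² ≥ 0`.
-/

open Metric Set

/-- Spatial gradient of a function on Euclidean space. -/
noncomputable def sgrad {n : ℕ} (f : EuclideanSpace ℝ (Fin n) → ℝ)
    (x : EuclideanSpace ℝ (Fin n)) : EuclideanSpace ℝ (Fin n) :=
  gradient f x

/-- Spatial Laplacian: sum of the second partial derivatives. -/
noncomputable def slap {n : ℕ} (f : EuclideanSpace ℝ (Fin n) → ℝ)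
    (x : EuclideanSpace ℝ (Fin n)) : ℝ :=
  ∑ i : Fin n, fderiv ℝ (fun y => fderiv ℝ f y (EuclideanSpace.single i 1)) x
    (EuclideanSpace.single i 1)

/-- `u(x,t)` is a (smooth) solution of the heat equation on `Q`. -/
def IsHeatSolutionOn {n : ℕ} (u : EuclideanSpace ℝ (Fin n) → ℝ → ℝ)
    (Q : Set (EuclideanSpace ℝ (Fin n) × ℝ)) : Prop :=
  ContDiffOn ℝ (⊤ : ℕ∞) (fun p : EuclideanSpace ℝ (Fin n) × ℝ => u p.1 p.2) Q ∧
  ∀ p ∈ Q, deriv (fun s => u p.1 s) p.2 = slap (fun y => u y p.2) p.1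

open scoped ContDiff

noncomputable def dirDeriv {H : Type*} [NormedAddCommGroup H] [NormedSpace ℝ H]
    (v : H) (A : H → ℝ) (q : H) : ℝ :=
  fderiv ℝ A q v

section DirDeriv

variable {H : Type*} [NormedAddCommGroup H] [NormedSpace ℝ H] {A B : H → ℝ} {U : Set H} {q : H}

theorem ContDiffOn.dirDeriv (hA : ContDiffOn ℝ ∞ A U) (hU : IsOpen U) (v : H) :
    ContDiffOn ℝ ∞ (dirDeriv v A) U :=
  (hA.fderiv_of_isOpen hU (by simp)).clm_apply contDiffOn_const

theorem ContDiffOn.differentiableAt_of_isOpen {F : Type*} [NormedAddCommGroup F]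
    [NormedSpace ℝ F] {A : H → F} (hA : ContDiffOn ℝ ∞ A U) (hU : IsOpen U)
    (hq : q ∈ U) : DifferentiableAt ℝ A q :=
  (hA.contDiffAt (hU.mem_nhds hq)).differentiableAt (by simp)

theorem eqOn_dirDeriv (h : EqOn A B U) (hU : IsOpen U) (v : H) :
    EqOn (dirDeriv v A) (dirDeriv v B) U := fun q hq => by
  rw [dirDeriv, dirDeriv, (Filter.eventuallyEq_of_mem (hU.mem_nhds hq) h).fderiv_eq]

theorem dirDeriv_add (hA : DifferentiableAt ℝ A q) (hB : DifferentiableAt ℝ B q) (v : H) :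
    dirDeriv v (fun y => A y + B y) q = dirDeriv v A q + dirDeriv v B q := by
  simp [dirDeriv, fderiv_fun_add hA hB]

theorem dirDeriv_sub (hA : DifferentiableAt ℝ A q) (hB : DifferentiableAt ℝ B q) (v : H) :
    dirDeriv v (fun y => A y - B y) q = dirDeriv v A q - dirDeriv v B q := by
  simp [dirDeriv, fderiv_fun_sub hA hB]

theorem dirDeriv_mul (hA : DifferentiableAt ℝ A q) (hB : DifferentiableAt ℝ B q) (v : H) :
    dirDeriv v (fun y => A y * B y) q = A q * dirDeriv v B q + B q * dirDeriv v A q := by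
  simp [dirDeriv, fderiv_fun_mul hA hB]

theorem dirDeriv_sum {ι : Type*} {s : Finset ι} {A : ι → H → ℝ}
    (hA : ∀ i ∈ s, DifferentiableAt ℝ (A i) q) (v : H) :
    dirDeriv v (fun y => ∑ i ∈ s, A i y) q = ∑ i ∈ s, dirDeriv v (A i) q := by
  simp [dirDeriv, fderiv_fun_sum hA]

theorem dirDeriv_const_sub (c : ℝ) (v : H) :
    dirDeriv v (fun y => c - A y) = fun q => -dirDeriv v A q := by
  ext q; simp [dirDeriv, fderiv_const_sub]

theorem dirDeriv_neg (v : H) : dirDeriv v (fun y => -A y) = fun q => -dirDeriv v A q := by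
  ext q; simp [dirDeriv, fderiv_fun_neg]

theorem dirDeriv_log (hA : DifferentiableAt ℝ A q) (hA0 : A q ≠ 0) (v : H) :
    dirDeriv v (fun y => Real.log (A y)) q = dirDeriv v A q / A q := by
  simp [dirDeriv, (hA.hasFDerivAt.log hA0).fderiv, div_eq_inv_mul]

theorem dirDeriv_comm (hA : ContDiffOn ℝ ∞ A U) (hU : IsOpen U) (hq : q ∈ U) (v w : H) :
    dirDeriv v (dirDeriv w A) q = dirDeriv w (dirDeriv v A) q := by
  have hA' := (hA.fderiv_of_isOpen hU (by simp) (m := ∞)).differentiableAt_of_isOpen hU hq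
  have hsymm := (hA.contDiffAt (hU.mem_nhds hq)).isSymmSndFDerivAt
    (by rw [minSmoothness_of_isRCLikeNormedField]; exact ENat.LEInfty.out) v w
  change fderiv ℝ (fun y => fderiv ℝ A y w) q v = fderiv ℝ (fun y => fderiv ℝ A y v) q w
  rw [fderiv_clm_apply hA' (differentiableAt_const _),
    fderiv_clm_apply hA' (differentiableAt_const _)]
  simpa using hsymm

end DirDeriv

noncomputable def laplacianAlong {H ι : Type*} [NormedAddCommGroup H] [NormedSpace ℝ H] [Fintype ι]
    (e : ι → H) (A : H → ℝ) (q : H) : ℝ :=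
  ∑ i, dirDeriv (e i) (dirDeriv (e i) A) q

noncomputable def gradInner {H ι : Type*} [NormedAddCommGroup H] [NormedSpace ℝ H] [Fintype ι]
    (e : ι → H) (A B : H → ℝ) (q : H) : ℝ :=
  ∑ i, dirDeriv (e i) A q * dirDeriv (e i) B q

/- With `e` the spatial coordinate directions and `τ` the time direction this is `∂ₜ - Δ`; the
calculus below only uses the symmetry of second derivatives, so `e` and `τ` stay arbitrary. -/
noncomputable def heatOp {H ι : Type*} [NormedAddCommGroup H] [NormedSpace ℝ H] [Fintype ι]
    (e : ι → H) (τ : H) (A : H → ℝ) (q : H) : ℝ :=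
  dirDeriv τ A q - laplacianAlong e A q

section HeatOp

variable {H ι : Type*} [NormedAddCommGroup H] [NormedSpace ℝ H] [Fintype ι] {e : ι → H} {τ : H}
  {A B C f W : H → ℝ} {U : Set H} {q : H}

theorem gradInner_comm (A B : H → ℝ) : gradInner e A B = gradInner e B A := by
  ext q; simp only [gradInner, mul_comm]

theorem gradInner_self_nonneg (A : H → ℝ) (q : H) : 0 ≤ gradInner e A A q :=
  Finset.sum_nonneg fun _ _ => mul_self_nonneg _

theorem eqOn_gradInner (h : EqOn B C U) (hU : IsOpen U) :
    EqOn (gradInner e A B) (gradInner e A C) U :=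
  fun q hq => Finset.sum_congr rfl fun i _ => by rw [eqOn_dirDeriv h hU (e i) hq]

theorem eqOn_heatOp (h : EqOn A B U) (hU : IsOpen U) : EqOn (heatOp e τ A) (heatOp e τ B) U :=
  fun q hq => by
    simp only [heatOp, laplacianAlong, eqOn_dirDeriv h hU τ hq,
      fun i => eqOn_dirDeriv (eqOn_dirDeriv h hU (e i)) hU (e i) hq]

theorem gradInner_const_sub_left (c : ℝ) :
    gradInner e (fun y => c - A y) B q = -gradInner e A B q := by
  simp [gradInner, dirDeriv_const_sub]

theorem heatOp_const_sub (c : ℝ) : heatOp e τ (fun y => c - A y) q = -heatOp e τ A q := by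
  simp only [heatOp, laplacianAlong, dirDeriv_const_sub, dirDeriv_neg, Finset.sum_neg_distrib]
  ring

theorem gradInner_log_left (hA : DifferentiableAt ℝ A q) (hA0 : A q ≠ 0) :
    gradInner e (fun y => Real.log (A y)) B q = gradInner e A B q / A q := by
  simp only [gradInner, dirDeriv_log hA hA0, Finset.sum_div]
  exact Finset.sum_congr rfl fun i _ => by ring

theorem gradInner_mul_right (hB : DifferentiableAt ℝ B q) (hC : DifferentiableAt ℝ C q) :
    gradInner e A (fun y => B y * C y) q = B q * gradInner e A C q + C q * gradInner e A B q := by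
  simp only [gradInner, dirDeriv_mul hB hC, Finset.mul_sum, ← Finset.sum_add_distrib]
  exact Finset.sum_congr rfl fun i _ => by ring

theorem ContDiffOn.gradInner (hA : ContDiffOn ℝ ∞ A U) (hB : ContDiffOn ℝ ∞ B U)
    (hU : IsOpen U) : ContDiffOn ℝ ∞ (gradInner e A B) U :=
  ContDiffOn.sum fun i _ => (hA.dirDeriv hU (e i)).mul (hB.dirDeriv hU (e i))

theorem eqOn_dirDeriv_mul (hU : IsOpen U) (hA : ContDiffOn ℝ ∞ A U) (hB : ContDiffOn ℝ ∞ B U)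
    (v : H) : EqOn (dirDeriv v (fun y => A y * B y))
      (fun y => A y * dirDeriv v B y + B y * dirDeriv v A y) U := fun _ hy =>
  dirDeriv_mul (hA.differentiableAt_of_isOpen hU hy) (hB.differentiableAt_of_isOpen hU hy) v

theorem heatOp_mul (hU : IsOpen U) (hA : ContDiffOn ℝ ∞ A U) (hB : ContDiffOn ℝ ∞ B U)
    (hq : q ∈ U) :
    heatOp e τ (fun y => A y * B y) q =
      A q * heatOp e τ B q + B q * heatOp e τ A q - 2 * gradInner e A B q := by
  have hd : ∀ {F : H → ℝ}, ContDiffOn ℝ ∞ F U → DifferentiableAt ℝ F q :=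
    fun hF => hF.differentiableAt_of_isOpen hU hq
  have hlap : laplacianAlong e (fun y => A y * B y) q =
      A q * laplacianAlong e B q + B q * laplacianAlong e A q + 2 * gradInner e A B q := by
    simp only [laplacianAlong, gradInner, Finset.mul_sum, ← Finset.sum_add_distrib]
    refine Finset.sum_congr rfl fun i _ => ?_
    have hAi := hA.dirDeriv hU (e i)
    have hBi := hB.dirDeriv hU (e i)
    rw [eqOn_dirDeriv (eqOn_dirDeriv_mul hU hA hB (e i)) hU (e i) hq,
      dirDeriv_add ((hd hA).fun_mul (hd hBi)) ((hd hB).fun_mul (hd hAi)),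
      dirDeriv_mul (hd hA) (hd hBi), dirDeriv_mul (hd hB) (hd hAi)]
    ring
  simp only [heatOp, hlap, dirDeriv_mul (hd hA) (hd hB)]
  ring

theorem heatOp_sum {κ : Type*} {s : Finset κ} {A : κ → H → ℝ} (hU : IsOpen U)
    (hA : ∀ k ∈ s, ContDiffOn ℝ ∞ (A k) U) (hq : q ∈ U) :
    heatOp e τ (fun y => ∑ k ∈ s, A k y) q = ∑ k ∈ s, heatOp e τ (A k) q := by
  have hsum : ∀ v, EqOn (dirDeriv v (fun y => ∑ k ∈ s, A k y))
      (fun y => ∑ k ∈ s, dirDeriv v (A k) y) U :=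
    fun v y hy => dirDeriv_sum (fun k hk => (hA k hk).differentiableAt_of_isOpen hU hy) v
  have hsum' : ∀ i, dirDeriv (e i) (fun y => ∑ k ∈ s, dirDeriv (e i) (A k) y) q =
      ∑ k ∈ s, dirDeriv (e i) (dirDeriv (e i) (A k)) q := fun i =>
    dirDeriv_sum (fun k hk => ((hA k hk).dirDeriv hU _).differentiableAt_of_isOpen hU hq) _
  simp only [heatOp, laplacianAlong, Finset.sum_sub_distrib, hsum τ hq,
    fun i => eqOn_dirDeriv (hsum (e i)) hU (e i) hq, hsum']
  rw [Finset.sum_comm]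

theorem heatOp_dirDeriv (hU : IsOpen U) (hA : ContDiffOn ℝ ∞ A U) (hq : q ∈ U) (v : H) :
    heatOp e τ (dirDeriv v A) q = dirDeriv v (heatOp e τ A) q := by
  have hd : ∀ {F : H → ℝ}, ContDiffOn ℝ ∞ F U → DifferentiableAt ℝ F q :=
    fun hF => hF.differentiableAt_of_isOpen hU hq
  have hlap : ContDiffOn ℝ ∞ (laplacianAlong e A) U :=
    ContDiffOn.sum fun i _ => (hA.dirDeriv hU _).dirDeriv hU _
  have hcomm : ∀ i, dirDeriv (e i) (dirDeriv (e i) (dirDeriv v A)) q =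
      dirDeriv v (dirDeriv (e i) (dirDeriv (e i) A)) q := fun i => by
    rw [eqOn_dirDeriv (fun y hy => dirDeriv_comm hA hU hy (e i) v) hU (e i) hq,
      dirDeriv_comm (hA.dirDeriv hU (e i)) hU hq]
  calc heatOp e τ (dirDeriv v A) q
      = dirDeriv v (dirDeriv τ A) q - ∑ i, dirDeriv v (dirDeriv (e i) (dirDeriv (e i) A)) q := by
        simp only [heatOp, laplacianAlong, hcomm, dirDeriv_comm hA hU hq τ v]
    _ = dirDeriv v (heatOp e τ A) q := by
        rw [← dirDeriv_sum fun i _ => hd ((hA.dirDeriv hU _).dirDeriv hU _)]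
        exact (dirDeriv_sub (hd (hA.dirDeriv hU τ)) (hd hlap) v).symm

theorem heatOp_log (hU : IsOpen U) (hA : ContDiffOn ℝ ∞ A U) (hpos : ∀ y ∈ U, 0 < A y)
    (hq : q ∈ U) :
    heatOp e τ (fun y => Real.log (A y)) q =
      heatOp e τ A q / A q + gradInner e (fun y => Real.log (A y)) (fun y => Real.log (A y)) q := by
  set L := fun y => Real.log (A y) with hL_def
  have hL : ContDiffOn ℝ ∞ L U := hA.log fun y hy => (hpos y hy).ne'
  have hd : ∀ {F : H → ℝ}, ContDiffOn ℝ ∞ F U → DifferentiableAt ℝ F q :=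
    fun hF => hF.differentiableAt_of_isOpen hU hq
  have hA0 : A q ≠ 0 := (hpos q hq).ne'
  have hmul : ∀ v, EqOn (fun y => A y * dirDeriv v L y) (dirDeriv v A) U := fun v y hy => by
    simp only [hL_def, dirDeriv_log (hA.differentiableAt_of_isOpen hU hy) (hpos y hy).ne']
    field_simp [(hpos y hy).ne']
  have hsecond : ∀ i, dirDeriv (e i) (dirDeriv (e i) L) q =
      dirDeriv (e i) (dirDeriv (e i) A) q / A q - dirDeriv (e i) L q * dirDeriv (e i) L q := by
    intro i
    have h := eqOn_dirDeriv (hmul (e i)) hU (e i) hq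
    rw [dirDeriv_mul (hd hA) (hd (hL.dirDeriv hU (e i))), ← hmul (e i) hq] at h
    field_simp
    linear_combination h
  simp only [heatOp, laplacianAlong, gradInner, hsecond, Finset.sum_sub_distrib, ← Finset.sum_div]
  rw [hL_def, dirDeriv_log (hd hA) hA0]
  ring

theorem heatOp_gradInner_self (hU : IsOpen U) (hA : ContDiffOn ℝ ∞ A U) (hq : q ∈ U) :
    heatOp e τ (gradInner e A A) q =
      2 * gradInner e A (heatOp e τ A) q -
        2 * ∑ i, gradInner e (dirDeriv (e i) A) (dirDeriv (e i) A) q := by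
  have hAi : ∀ i, ContDiffOn ℝ ∞ (dirDeriv (e i) A) U := fun i => hA.dirDeriv hU (e i)
  rw [show gradInner e A A = fun y => ∑ i, dirDeriv (e i) A y * dirDeriv (e i) A y from rfl,
    heatOp_sum hU (fun i _ => (hAi i).mul (hAi i)) hq]
  simp only [heatOp_mul hU (hAi _) (hAi _) hq, heatOp_dirDeriv hU hA hq, gradInner, Finset.mul_sum,
    ← Finset.sum_sub_distrib]
  exact Finset.sum_congr rfl fun i _ => by ring

theorem gradInner_log_one_sub_left (hf : DifferentiableAt ℝ f q) (hf1 : f q < 1) :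
    gradInner e (fun y => Real.log (1 - f y)) B q = -gradInner e f B q / (1 - f q) := by
  rw [gradInner_log_left (hf.const_sub 1) (sub_pos.2 hf1).ne', gradInner_const_sub_left]

theorem gradInner_log_one_sub_self (hf : DifferentiableAt ℝ f q) (hf1 : f q < 1) :
    gradInner e (fun y => Real.log (1 - f y)) (fun y => Real.log (1 - f y)) q =
      gradInner e f f q / (1 - f q) ^ 2 := by
  rw [gradInner_log_one_sub_left hf hf1, gradInner_comm, gradInner_log_one_sub_left hf hf1]
  field_simp [(sub_pos.2 hf1).ne']

theorem heatOp_log_one_sub (hU : IsOpen U) (hf : ContDiffOn ℝ ∞ f U) (hf1 : ∀ y ∈ U, f y < 1)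
    (hfeq : EqOn (heatOp e τ f) (gradInner e f f) U) (hq : q ∈ U) :
    heatOp e τ (fun y => Real.log (1 - f y)) q = f q * (gradInner e f f q / (1 - f q) ^ 2) := by
  have hpos : ∀ y ∈ U, 0 < 1 - f y := fun y hy => sub_pos.2 (hf1 y hy)
  rw [heatOp_log hU (contDiffOn_const.sub hf) hpos hq, heatOp_const_sub,
    gradInner_log_one_sub_self (hf.differentiableAt_of_isOpen hU hq) (hf1 q hq), hfeq hq]
  field_simp [(hpos q hq).ne']
  ring

theorem laplacianAlong_sub_dirDeriv_ge (hU : IsOpen U) (hf : ContDiffOn ℝ ∞ f U)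
    (hf1 : ∀ y ∈ U, f y < 1) (hfeq : EqOn (heatOp e τ f) (gradInner e f f) U)
    (hW : EqOn W (fun y => gradInner e f f y / (1 - f y) ^ 2) U) (hq : q ∈ U) :
    laplacianAlong e W q - dirDeriv τ W q ≥
      2 * f q / (1 - f q) * gradInner e f W q + 2 * (1 - f q) * W q ^ 2 := by
  set h := fun y => Real.log (1 - f y) with h_def
  have hφ : 1 - f q ≠ 0 := (sub_pos.2 (hf1 q hq)).ne'
  have hfd : ∀ y ∈ U, DifferentiableAt ℝ f y := fun y hy => hf.differentiableAt_of_isOpen hU hy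
  have hh : ContDiffOn ℝ ∞ h U :=
    (contDiffOn_const.sub hf).log fun y hy => (sub_pos.2 (hf1 y hy)).ne'
  have hWh : EqOn W (gradInner e h h) U := fun y hy => by
    rw [hW hy, h_def, gradInner_log_one_sub_self (hfd y hy) (hf1 y hy)]
  have hWd : DifferentiableAt ℝ W q :=
    ((hh.gradInner hh hU).congr hWh).differentiableAt_of_isOpen hU hq
  have hheat : EqOn (heatOp e τ h) (fun y => f y * W y) U := fun y hy => by
    simp only [h_def, heatOp_log_one_sub hU hf hf1 hfeq hy, hW hy]
  have hff : gradInner e f f q = (1 - f q) ^ 2 * W q := by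
    rw [hW hq]; field_simp
  have hbochner := heatOp_gradInner_self (e := e) (τ := τ) hU hh hq
  rw [← eqOn_heatOp hWh hU hq, eqOn_gradInner hheat hU hq, gradInner_mul_right (hfd q hq) hWd,
    h_def, gradInner_log_one_sub_left (hfd q hq) (hf1 q hq),
    gradInner_log_one_sub_left (hfd q hq) (hf1 q hq), hff, heatOp] at hbochner
  have hhess : 0 ≤ ∑ i, gradInner e (dirDeriv (e i) h) (dirDeriv (e i) h) q :=
    Finset.sum_nonneg fun i _ => gradInner_self_nonneg _ _
  have hid : laplacianAlong e W q - dirDeriv τ W q = 2 * f q / (1 - f q) * gradInner e f W q +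
      2 * (1 - f q) * W q ^ 2 + 2 * ∑ i, gradInner e (dirDeriv (e i) h) (dirDeriv (e i) h) q := by
    field_simp at hbochner ⊢
    linear_combination -hbochner
  linarith

end HeatOp

section Slices

variable {E : Type*} [NormedAddCommGroup E] [NormedSpace ℝ E] {g : E → ℝ → ℝ} {x : E} {t : ℝ}

theorem fderiv_slice_apply (hg : DifferentiableAt ℝ (fun q : E × ℝ => g q.1 q.2) (x, t)) (v : E) :
    fderiv ℝ (fun y => g y t) x v = dirDeriv (v, 0) (fun q => g q.1 q.2) (x, t) := by
  have hembed : HasFDerivAt (fun y : E => (y, t)) ((ContinuousLinearMap.id ℝ E).prod 0) x :=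
    (hasFDerivAt_id x).prodMk (hasFDerivAt_const t x)
  exact congrArg (· v) (hg.hasFDerivAt.comp x hembed).fderiv

theorem deriv_slice (hg : DifferentiableAt ℝ (fun q : E × ℝ => g q.1 q.2) (x, t)) :
    deriv (fun s => g x s) t = dirDeriv (0, 1) (fun q => g q.1 q.2) (x, t) :=
  (hg.hasFDerivAt.comp_hasDerivAt t ((hasDerivAt_const t x).prodMk (hasDerivAt_id t))).deriv

end Slices

noncomputable def spaceBasis (n : ℕ) : Fin n → EuclideanSpace ℝ (Fin n) × ℝ :=
  fun i => (EuclideanSpace.single i 1, 0)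

theorem EuclideanSpace.gradient_apply {n : ℕ} (f : EuclideanSpace ℝ (Fin n) → ℝ)
    (x : EuclideanSpace ℝ (Fin n)) (i : Fin n) :
    gradient f x i = fderiv ℝ f x (EuclideanSpace.single i 1) := by
  rw [← inner_gradient_left, EuclideanSpace.inner_single_right]
  simp

section EuclideanSlices

variable {n : ℕ} {Q : Set (EuclideanSpace ℝ (Fin n) × ℝ)} {x : EuclideanSpace ℝ (Fin n)} {t : ℝ}

theorem slap_slice {g : EuclideanSpace ℝ (Fin n) → ℝ → ℝ} (hQ : IsOpen Q)
    (hg : ContDiffOn ℝ ∞ (fun q => g q.1 q.2) Q) (hp : (x, t) ∈ Q) :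
    slap (fun y => g y t) x = laplacianAlong (spaceBasis n) (fun q => g q.1 q.2) (x, t) := by
  have hslice : IsOpen {y | (y, t) ∈ Q} := hQ.preimage (continuous_id.prodMk continuous_const)
  refine Finset.sum_congr rfl fun i _ => ?_
  have hnear : (fun y => fderiv ℝ (fun z => g z t) y (EuclideanSpace.single i 1)) =ᶠ[nhds x]
      fun y => dirDeriv (spaceBasis n i) (fun q => g q.1 q.2) (y, t) := by
    filter_upwards [hslice.mem_nhds hp] with y hy
    exact fderiv_slice_apply (hg.differentiableAt_of_isOpen hQ hy) _
  rw [hnear.fderiv_eq]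
  exact fderiv_slice_apply (g := fun y s => dirDeriv (spaceBasis n i) (fun q => g q.1 q.2) (y, s))
    ((hg.dirDeriv hQ _).differentiableAt_of_isOpen hQ hp) _

open RealInnerProductSpace in
theorem inner_sgrad_slice {a b : EuclideanSpace ℝ (Fin n) → ℝ → ℝ}
    (ha : DifferentiableAt ℝ (fun q : EuclideanSpace ℝ (Fin n) × ℝ => a q.1 q.2) (x, t))
    (hb : DifferentiableAt ℝ (fun q : EuclideanSpace ℝ (Fin n) × ℝ => b q.1 q.2) (x, t)) :
    ⟪sgrad (fun y => a y t) x, sgrad (fun y => b y t) x⟫ =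
      gradInner (spaceBasis n) (fun q => a q.1 q.2) (fun q => b q.1 q.2) (x, t) := by
  rw [PiLp.inner_apply]
  refine Finset.sum_congr rfl fun i _ => ?_
  rw [sgrad, sgrad, EuclideanSpace.gradient_apply, EuclideanSpace.gradient_apply,
    fderiv_slice_apply ha, fderiv_slice_apply hb, real_inner_eq_re_inner, RCLike.inner_apply]
  simp [spaceBasis, mul_comm]

theorem IsHeatSolutionOn.heatOp_eq_zero {u : EuclideanSpace ℝ (Fin n) → ℝ → ℝ}
    (hu : IsHeatSolutionOn u Q) (hQ : IsOpen Q) {p} (hp : p ∈ Q) :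
    heatOp (spaceBasis n) (0, 1) (fun q => u q.1 q.2) p = 0 := by
  rw [heatOp, ← deriv_slice (ContDiffOn.differentiableAt_of_isOpen hu.1 hQ hp),
    ← slap_slice hQ hu.1 hp, hu.2 p hp, sub_self]

end EuclideanSlices

open RealInnerProductSpace in
theorem key_differential_inequality_general (n : ℕ)
    (Q : Set (EuclideanSpace ℝ (Fin n) × ℝ)) (hQ : IsOpen Q)
    (u : EuclideanSpace ℝ (Fin n) → ℝ → ℝ)
    (hsol : IsHeatSolutionOn u Q)
    (hpos : ∀ p ∈ Q, 0 < u p.1 p.2) (hle : ∀ p ∈ Q, u p.1 p.2 ≤ 1)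
    (f : EuclideanSpace ℝ (Fin n) → ℝ → ℝ)
    (hf : f = fun x t => Real.log (u x t))
    (w : EuclideanSpace ℝ (Fin n) → ℝ → ℝ)
    (hw : w = fun x t => ‖sgrad (fun y => f y t) x‖ ^ 2 / (1 - f x t) ^ 2) :
    ∀ p ∈ Q,
      slap (fun y => w y p.2) p.1 - deriv (fun s => w p.1 s) p.2 ≥
        (2 * f p.1 p.2 / (1 - f p.1 p.2)) *
          ⟪sgrad (fun y => f y p.2) p.1, sgrad (fun y => w y p.2) p.1⟫ +
        2 * (1 - f p.1 p.2) * (w p.1 p.2) ^ 2 := by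
  rintro ⟨x, t⟩ hp
  have hF : ContDiffOn ℝ ∞ (fun q => f q.1 q.2) Q := by
    subst hf; exact hsol.1.log fun q hq => (hpos q hq).ne'
  have hFd : ∀ q ∈ Q, DifferentiableAt ℝ (fun q => f q.1 q.2) q :=
    fun q hq => hF.differentiableAt_of_isOpen hQ hq
  have hF1 : ∀ q ∈ Q, f q.1 q.2 < 1 := fun q hq => by
    subst hf; exact (Real.log_nonpos (hpos q hq).le (hle q hq)).trans_lt one_pos
  have hFeq : EqOn (heatOp (spaceBasis n) (0, 1) (fun q => f q.1 q.2))
      (gradInner (spaceBasis n) (fun q => f q.1 q.2) (fun q => f q.1 q.2)) Q := fun q hq => by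
    subst hf; rw [heatOp_log hQ hsol.1 hpos hq, hsol.heatOp_eq_zero hQ hq, zero_div, zero_add]
  have hW : EqOn (fun q => w q.1 q.2) (fun q => gradInner (spaceBasis n) (fun q => f q.1 q.2)
      (fun q => f q.1 q.2) q / (1 - f q.1 q.2) ^ 2) Q := fun q hq => by
    simp only [hw, ← real_inner_self_eq_norm_sq, inner_sgrad_slice (hFd q hq) (hFd q hq)]
  have hWs : ContDiffOn ℝ ∞ (fun q => w q.1 q.2) Q :=
    ((hF.gradInner hF hQ).div ((contDiffOn_const.sub hF).pow 2)
      fun q hq => pow_ne_zero 2 (sub_pos.2 (hF1 q hq)).ne').congr hW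
  have hWd := hWs.differentiableAt_of_isOpen hQ hp
  rw [slap_slice hQ hWs hp, deriv_slice hWd, inner_sgrad_slice (hFd _ hp) hWd]
  exact laplacianAlong_sub_dirDeriv_ge hQ hF hF1 hFeq hW hp

open RealInnerProductSpace in
/-- Inequality (2.9), flat case `k = 0`: the key pointwise inequality in the proof. -/
theorem key_differential_inequality (n : ℕ) (hn : 1 ≤ n)
    (Q : Set (EuclideanSpace ℝ (Fin n) × ℝ)) (hQ : IsOpen Q)
    (u : EuclideanSpace ℝ (Fin n) → ℝ → ℝ)
    (hsol : IsHeatSolutionOn u Q)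
    (hpos : ∀ p ∈ Q, 0 < u p.1 p.2) (hle : ∀ p ∈ Q, u p.1 p.2 ≤ 1)
    (f : EuclideanSpace ℝ (Fin n) → ℝ → ℝ)
    (hf : f = fun x t => Real.log (u x t))
    (w : EuclideanSpace ℝ (Fin n) → ℝ → ℝ)
    (hw : w = fun x t => ‖sgrad (fun y => f y t) x‖ ^ 2 / (1 - f x t) ^ 2) :
    ∀ p ∈ Q,
      slap (fun y => w y p.2) p.1 - deriv (fun s => w p.1 s) p.2 ≥
        (2 * f p.1 p.2 / (1 - f p.1 p.2)) *
          ⟪sgrad (fun y => f y p.2) p.1, sgrad (fun y => w y p.2) p.1⟫ +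
        2 * (1 - f p.1 p.2) * (w p.1 p.2) ^ 2 :=
  key_differential_inequality_general n Q hQ u hsol hpos hle f hf w hw
end

section
/- For every constant c > 0 and every exponent α ∈ [0, 1), there exists a smooth positive solution u of the heat equation on Q := [1,3] × [1,2] ⊂ ℝ × ℝ such that, with M := sup_Q u, one has |∂_x u(2,2)|/u(2,2) > c (1 + ln(M/u(2,2)))^α. Indeed, for a > 0 the function u(x,t) = e^{a x + a² t} solves the heat equation, satisfies M = e^{3a + 2a²}, |∂_x u(2,2)|/u(2,2) = a and ln(M/u(2,2)) = a. (Remark 1.1: the logarithmic correction in Theorem 1.1 is sharp, and Hamilton's estimate (1.3) with the square root of the log fails on noncompact spaces.) -/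
open Set

/-- `u(x,t)` is a (smooth) solution of the one-dimensional heat equation
`∂_t u = ∂_x² u` on `Q ⊂ ℝ × ℝ`. -/
def IsHeatSolutionOn1D (u : ℝ → ℝ → ℝ) (Q : Set (ℝ × ℝ)) : Prop :=
  ContDiffOn ℝ (⊤ : ℕ∞) (fun p : ℝ × ℝ => u p.1 p.2) Q ∧
  ∀ p ∈ Q, deriv (fun s => u p.1 s) p.2 = deriv (deriv (fun y => u y p.2)) p.1

/-! For `a > 0` the exponential `u(x,t) = exp (a x + a² t)` solves the heat equation and is
largest on `Q` at the corner `(3,2)`, so `log (M / u(2,2)) = a` while `|∂ₓu(2,2)| / u(2,2) = a`.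
Since `α < 1`, `c (1 + a) ^ α = o(a)` as `a → ∞`, so a large `a` beats the `α`-power of the log. -/

open Real Filter Topology

theorem exists_pos_const_mul_one_add_rpow_lt {α : ℝ} (hα : α < 1) (c : ℝ) :
    ∃ a > 0, c * (1 + a) ^ α < a := by
  have hdecay : Tendsto (fun b : ℝ => c * b ^ (α - 1)) atTop (𝓝 0) := by
    simpa using (tendsto_rpow_neg_atTop (sub_pos.2 hα)).const_mul c
  obtain ⟨b, hb, hb2⟩ :=
    ((hdecay.eventually (gt_mem_nhds one_half_pos)).and (eventually_ge_atTop 2)).exists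
  refine ⟨b - 1, by linarith, ?_⟩
  calc c * (1 + (b - 1)) ^ α = c * b ^ (α - 1) * b := by
        rw [add_sub_cancel, mul_assoc, ← rpow_add_one (by positivity), sub_add_cancel]
    _ < 1 / 2 * b := mul_lt_mul_of_pos_right hb (by positivity)
    _ ≤ b - 1 := by linarith

theorem hasDerivAt_exp_mul_add (a b x : ℝ) :
    HasDerivAt (fun y => exp (a * y + b)) (a * exp (a * x + b)) x := by
  simpa [mul_comm] using (((hasDerivAt_id x).const_mul a).add_const b).exp

theorem deriv_exp_mul_add (a b : ℝ) :
    deriv (fun y => exp (a * y + b)) = fun x => a * exp (a * x + b) :=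
  funext fun x => (hasDerivAt_exp_mul_add a b x).deriv

theorem isHeatSolutionOn1D_exp (a : ℝ) (Q : Set (ℝ × ℝ)) :
    IsHeatSolutionOn1D (fun x t => exp (a * x + a ^ 2 * t)) Q := by
  refine ⟨by fun_prop, fun ⟨x, t⟩ _ => ?_⟩
  have hdt : HasDerivAt (fun s => exp (a * x + a ^ 2 * s)) (a ^ 2 * exp (a * x + a ^ 2 * t)) t := by
    simpa [mul_comm] using (((hasDerivAt_id t).const_mul (a ^ 2)).const_add (a * x)).exp
  have hdxx := (hasDerivAt_exp_mul_add a (a ^ 2 * t) x).const_mul a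
  rw [← mul_assoc, ← sq] at hdxx
  dsimp only
  rw [hdt.deriv, deriv_exp_mul_add, hdxx.deriv]

theorem sSup_exp_image_Icc_prod_Icc {a x₁ x₂ t₁ t₂ : ℝ} (ha : 0 ≤ a) (hx : x₁ ≤ x₂)
    (ht : t₁ ≤ t₂) :
    sSup ((fun p : ℝ × ℝ => exp (a * p.1 + a ^ 2 * p.2)) '' (Icc x₁ x₂ ×ˢ Icc t₁ t₂)) =
      exp (a * x₂ + a ^ 2 * t₂) := by
  refine IsGreatest.csSup_eq ⟨⟨(x₂, t₂), ⟨⟨hx, le_rfl⟩, ⟨ht, le_rfl⟩⟩, rfl⟩, ?_⟩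
  rintro _ ⟨⟨x, t⟩, ⟨⟨-, hx₂⟩, ⟨-, ht₂⟩⟩, rfl⟩
  dsimp only
  gcongr

theorem log_correction_sharp_general (c α : ℝ) (hα : α ∈ Ico (0:ℝ) 1) :
    ∃ u : ℝ → ℝ → ℝ,
      IsHeatSolutionOn1D u (Icc 1 3 ×ˢ Icc 1 2) ∧
      (∀ p ∈ Icc (1:ℝ) 3 ×ˢ Icc (1:ℝ) 2, 0 < u p.1 p.2) ∧
      ∀ M : ℝ, M = sSup ((fun p : ℝ × ℝ => u p.1 p.2) '' (Icc 1 3 ×ˢ Icc 1 2)) →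
        c * (1 + Real.log (M / u 2 2)) ^ α < |deriv (fun y => u y 2) 2| / u 2 2 := by
  obtain ⟨a, ha, hca⟩ := exists_pos_const_mul_one_add_rpow_lt hα.2 c
  refine ⟨fun x t => exp (a * x + a ^ 2 * t), isHeatSolutionOn1D_exp a _,
    fun _ _ => exp_pos _, fun M hM => ?_⟩
  have hM' : M = exp (a * 3 + a ^ 2 * 2) :=
    hM.trans (sSup_exp_image_Icc_prod_Icc ha.le (by norm_num) (by norm_num))
  have hlog : log (M / exp (a * 2 + a ^ 2 * 2)) = a := by
    rw [hM', ← exp_sub, log_exp]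
    ring
  rw [hlog, deriv_exp_mul_add, abs_of_pos (by positivity), mul_div_cancel_right₀ _ (exp_ne_zero _)]
  exact hca

/-- Remark 1.1: the logarithmic correction in Theorem 1.1 is sharp; any power
`α < 1` of the log term fails. -/
theorem log_correction_sharp (c α : ℝ) (hc : 0 < c) (hα : α ∈ Ico (0:ℝ) 1) :
    ∃ u : ℝ → ℝ → ℝ,
      IsHeatSolutionOn1D u (Icc 1 3 ×ˢ Icc 1 2) ∧
      (∀ p ∈ Icc (1:ℝ) 3 ×ˢ Icc (1:ℝ) 2, 0 < u p.1 p.2) ∧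
      ∀ M : ℝ, M = sSup ((fun p : ℝ × ℝ => u p.1 p.2) '' (Icc 1 3 ×ˢ Icc 1 2)) →
        c * (1 + Real.log (M / u 2 2)) ^ α < |deriv (fun y => u y 2) 2| / u 2 2 :=
  log_correction_sharp_general c α hα
end
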